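/- Let U : ℝ^d → ℝ be continuously differentiable, m-strongly convex (m > 0) with minimizer x*, and L₁-Lipschitz gradient. Fix γ ∈ (0, 1/m̃) where m̃ = mL₁/(m+L₁), and let v ∈ ℝ^d with |v| ≤ C₀ be any vector. Then |x − x* − γ∇U(x) + (γ²/2)v|² ≤ (1 − m̃γ)|x − x*|² + γ³(C₀²/(4m̃) + γC₀²/4 + γ|∇U(x)||v|) whenever additionally −2γ/(m+L₁) + (5/4)γ² + γ³L₁²/(2m̃) + γ⁴L₁²/2 ≤ 0. -/

import Mathlib

/-!
Co-coercivity of the gradient of an `m`-strongly convex function with `L`-Lipschitz gradient,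
`‖∇U x - ∇U y‖² + m L ‖x - y‖² ≤ (m + L) ⟪x - y, ∇U x - ∇U y⟫`, follows from the Baillon–Haddad
argument applied to the convex function `U - m/2 ‖·‖²`. At `y = x*`, where `∇U = 0`, it shows
that the gradient step `x - x* - γ ∇U x` contracts `‖x - x*‖²` by the factor `1 - 2 m̃ γ` as
soon as `γ (m + L) ≤ 2`, which the side condition guarantees. The perturbation `(γ²/2) v` is
then absorbed by Young's inequality, at the price of half of the contraction gain.
-/

open Set
open scoped RealInnerProductSpace

theorem le_add_deriv_add_of_deriv_le {φ φ' : ℝ → ℝ} {c : ℝ} (hφ : ∀ t, HasDerivAt φ (φ' t) t)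
    (h : ∀ t ∈ Ioo (0 : ℝ) 1, φ' t ≤ φ' 0 + c * t) : φ 1 ≤ φ 0 + φ' 0 + c / 2 := by
  set ψ : ℝ → ℝ := fun t ↦ φ t - φ' 0 * t - c / 2 * t ^ 2
  have hψ : ∀ t, HasDerivAt ψ (φ' t - φ' 0 - c * t) t := fun t ↦ by
    refine (((hφ t).sub ((hasDerivAt_id' t).const_mul (φ' 0))).sub
      ((hasDerivAt_pow 2 t).const_mul (c / 2))).congr_deriv ?_
    norm_num
    ring
  have hanti : AntitoneOn ψ (Icc 0 1) := by
    refine antitoneOn_of_hasDerivWithinAt_nonpos (convex_Icc 0 1)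
      (fun t _ ↦ (hψ t).continuousAt.continuousWithinAt) (fun t _ ↦ (hψ t).hasDerivWithinAt) ?_
    rw [interior_Icc]
    intro t ht
    linarith [h t ht]
  have hends := hanti (left_mem_Icc.2 zero_le_one) (right_mem_Icc.2 zero_le_one) zero_le_one
  simp only [ψ] at hends
  linarith

theorem add_deriv_add_le_of_le_deriv {φ φ' : ℝ → ℝ} {c : ℝ} (hφ : ∀ t, HasDerivAt φ (φ' t) t)
    (h : ∀ t ∈ Ioo (0 : ℝ) 1, φ' 0 + c * t ≤ φ' t) : φ 0 + φ' 0 + c / 2 ≤ φ 1 := by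
  have hneg := le_add_deriv_add_of_deriv_le (φ := -φ) (φ' := -φ') (c := -c) (fun t ↦ (hφ t).neg)
    fun t ht ↦ by simp only [Pi.neg_apply]; linarith [h t ht]
  simp only [Pi.neg_apply] at hneg
  linarith

variable {E : Type*} [NormedAddCommGroup E] [InnerProductSpace ℝ E]

section Cocoercive

variable {F : E → ℝ} {G : E → E} {c : ℝ}

theorem add_inner_add_norm_sq_le_of_quadratic_bounds (hc : 0 < c)
    (hlower : ∀ y z, F y + ⟪G y, z - y⟫ ≤ F z)
    (hupper : ∀ y z, F z ≤ F y + ⟪G y, z - y⟫ + c / 2 * ‖z - y‖ ^ 2) (x y : E) :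
    F x + ⟪G x, y - x⟫ + ‖G y - G x‖ ^ 2 / (2 * c) ≤ F y := by
  set D := G y - G x
  -- `y - c⁻¹ • D` minimises the upper quadratic model of `F - ⟪G x, ·⟫` around `y`
  have h₁ := hlower x (y - c⁻¹ • D)
  have h₂ := hupper y (y - c⁻¹ • D)
  have hzx : y - c⁻¹ • D - x = (y - x) - c⁻¹ • D := sub_right_comm _ _ _
  have hzy : y - c⁻¹ • D - y = -(c⁻¹ • D) := sub_sub_cancel_left _ _
  rw [hzx, inner_sub_right, real_inner_smul_right] at h₁
  rw [hzy, inner_neg_right, real_inner_smul_right, norm_neg, norm_smul, Real.norm_of_nonneg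
    (inv_nonneg.2 hc.le)] at h₂
  have hD : c⁻¹ * ⟪G y, D⟫ - c⁻¹ * ⟪G x, D⟫ = c⁻¹ * ‖D‖ ^ 2 := by
    rw [← mul_sub, ← inner_sub_left, real_inner_self_eq_norm_sq]
  have hc' : c / 2 * (c⁻¹ * ‖D‖) ^ 2 = c⁻¹ * ‖D‖ ^ 2 - ‖D‖ ^ 2 / (2 * c) := by
    field_simp
    ring
  linarith

theorem inner_sub_ge_of_quadratic_bounds (hc : 0 < c)
    (hlower : ∀ y z, F y + ⟪G y, z - y⟫ ≤ F z)
    (hupper : ∀ y z, F z ≤ F y + ⟪G y, z - y⟫ + c / 2 * ‖z - y‖ ^ 2) (x y : E) :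
    ‖G x - G y‖ ^ 2 / c ≤ ⟪x - y, G x - G y⟫ := by
  have hxy := add_inner_add_norm_sq_le_of_quadratic_bounds hc hlower hupper x y
  have hyx := add_inner_add_norm_sq_le_of_quadratic_bounds hc hlower hupper y x
  rw [norm_sub_rev] at hxy
  have hsum : ⟪x - y, G x - G y⟫ = -⟪G x, y - x⟫ - ⟪G y, x - y⟫ := by
    rw [inner_sub_right, real_inner_comm, real_inner_comm (G y), ← neg_sub y x, inner_neg_right]
  have hc2 : ‖G x - G y‖ ^ 2 / (2 * c) + ‖G x - G y‖ ^ 2 / (2 * c) = ‖G x - G y‖ ^ 2 / c := by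
    ring
  linarith

end Cocoercive

section Gradient

variable [CompleteSpace E]

theorem hasDerivAt_comp_add_smul {U : E → ℝ} (hU : Differentiable ℝ U) (y w : E) (t : ℝ) :
    HasDerivAt (fun s : ℝ ↦ U (y + s • w)) ⟪gradient U (y + t • w), w⟫ t := by
  have hline : HasDerivAt (fun s : ℝ ↦ y + s • w) w t := by
    simpa using ((hasDerivAt_id t).smul_const w).const_add y
  rw [inner_gradient_left]
  exact (hU _).hasFDerivAt.comp_hasDerivAt t hline

theorem le_add_inner_gradient_add_of_lipschitz {U : E → ℝ} (hU : Differentiable ℝ U) {L : ℝ}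
    (hLip : ∀ x y, ‖gradient U x - gradient U y‖ ≤ L * ‖x - y‖) (y z : E) :
    U z ≤ U y + ⟪gradient U y, z - y⟫ + L / 2 * ‖z - y‖ ^ 2 := by
  have key := le_add_deriv_add_of_deriv_le (c := L * ‖z - y‖ ^ 2)
    (hasDerivAt_comp_add_smul hU y (z - y)) fun t ht ↦ by
      have hgrad := hLip (y + t • (z - y)) y
      rw [add_sub_cancel_left, norm_smul, Real.norm_of_nonneg ht.1.le] at hgrad
      have hcs := real_inner_le_norm (gradient U (y + t • (z - y)) - gradient U y) (z - y)
      rw [inner_sub_left] at hcs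
      rw [zero_smul, add_zero]
      nlinarith [norm_nonneg (z - y)]
  simp only [zero_smul, add_zero, one_smul, add_sub_cancel] at key
  linarith

theorem add_inner_gradient_add_le_of_strongly_monotone {U : E → ℝ} (hU : Differentiable ℝ U)
    {m : ℝ} (hmono : ∀ x y, ⟪x - y, gradient U x - gradient U y⟫ ≥ m * ‖x - y‖ ^ 2) (y z : E) :
    U y + ⟪gradient U y, z - y⟫ + m / 2 * ‖z - y‖ ^ 2 ≤ U z := by
  have key := add_deriv_add_le_of_le_deriv (c := m * ‖z - y‖ ^ 2)
    (hasDerivAt_comp_add_smul hU y (z - y)) fun t ht ↦ by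
      have h := hmono (y + t • (z - y)) y
      rw [add_sub_cancel_left, norm_smul, Real.norm_of_nonneg ht.1.le, real_inner_smul_left,
        inner_sub_right] at h
      rw [zero_smul, add_zero, real_inner_comm (z - y), real_inner_comm (z - y)]
      nlinarith [ht.1]
  simp only [zero_smul, add_zero, one_smul, add_sub_cancel] at key
  linarith

theorem mul_inner_gradient_sub_ge_of_strongly_monotone_of_lipschitz {U : E → ℝ}
    (hU : Differentiable ℝ U) {m L : ℝ} (hm : 0 < m) (hL : 0 ≤ L)
    (hmono : ∀ x y, ⟪x - y, gradient U x - gradient U y⟫ ≥ m * ‖x - y‖ ^ 2)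
    (hLip : ∀ x y, ‖gradient U x - gradient U y‖ ≤ L * ‖x - y‖) (x y : E) :
    ‖gradient U x - gradient U y‖ ^ 2 + m * L * ‖x - y‖ ^ 2
      ≤ (m + L) * ⟪x - y, gradient U x - gradient U y⟫ := by
  set Δ := x - y
  set Δg := gradient U x - gradient U y
  rcases le_or_gt L m with hLm | hmL
  · have hmono_xy := hmono x y
    have hLip_xy := hLip x y
    have hΔg : ‖Δg‖ ^ 2 ≤ L ^ 2 * ‖Δ‖ ^ 2 := by
      nlinarith [norm_nonneg Δg, norm_nonneg Δ]
    nlinarith [mul_nonneg (mul_nonneg (sub_nonneg.2 hLm) (by linarith : (0 : ℝ) ≤ m + L))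
      (sq_nonneg ‖Δ‖)]
  -- `U - m/2 ‖·‖²` is convex with `(L - m)`-Lipschitz gradient `∇U - m • id`
  set F : E → ℝ := fun z ↦ U z - m / 2 * ‖z‖ ^ 2
  set G : E → E := fun z ↦ gradient U z - m • z
  have hgap : ∀ y z, F z - (F y + ⟪G y, z - y⟫)
      = U z - (U y + ⟪gradient U y, z - y⟫) - m / 2 * ‖z - y‖ ^ 2 := fun y z ↦ by
    have hz : ‖z‖ ^ 2 = ‖y‖ ^ 2 + 2 * ⟪y, z - y⟫ + ‖z - y‖ ^ 2 := by
      rw [← norm_add_sq_real, add_sub_cancel]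
    simp only [F, G, inner_sub_left, real_inner_smul_left, hz]
    ring
  have hlower : ∀ y z, F y + ⟪G y, z - y⟫ ≤ F z := fun y z ↦ by
    linarith [hgap y z, add_inner_gradient_add_le_of_strongly_monotone hU hmono y z]
  have hupper : ∀ y z, F z ≤ F y + ⟪G y, z - y⟫ + (L - m) / 2 * ‖z - y‖ ^ 2 := fun y z ↦ by
    linarith [hgap y z, le_add_inner_gradient_add_of_lipschitz hU hLip y z]
  have hco := inner_sub_ge_of_quadratic_bounds (sub_pos.2 hmL) hlower hupper x y
  have hGxy : G x - G y = Δg - m • Δ := by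
    simp only [G, Δg, Δ, smul_sub]
    abel
  rw [hGxy, div_le_iff₀ (sub_pos.2 hmL), norm_sub_sq_real, inner_sub_right, real_inner_smul_right,
    real_inner_smul_right, real_inner_self_eq_norm_sq, norm_smul, Real.norm_of_nonneg hm.le,
    real_inner_comm Δ] at hco
  nlinarith

end Gradient

theorem norm_sub_smul_sq_le_of_cocoercive {a g : E} {m L γ : ℝ} (hmL : 0 < m + L)
    (hco : ‖g‖ ^ 2 + m * L * ‖a‖ ^ 2 ≤ (m + L) * ⟪a, g⟫) (hγ : 0 ≤ γ)
    (hstep : γ ^ 2 * (m + L) ≤ 2 * γ) :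
    ‖a - γ • g‖ ^ 2 ≤ (1 - 2 * γ * (m * L / (m + L))) * ‖a‖ ^ 2 := by
  have hexp : ‖a - γ • g‖ ^ 2 = ‖a‖ ^ 2 - 2 * γ * ⟪a, g⟫ + γ ^ 2 * ‖g‖ ^ 2 := by
    rw [norm_sub_sq_real, real_inner_smul_right, norm_smul, Real.norm_of_nonneg hγ]
    ring
  have hrhs : (1 - 2 * γ * (m * L / (m + L))) * ‖a‖ ^ 2
      = ‖a‖ ^ 2 - 2 * γ * (m * L * ‖a‖ ^ 2) / (m + L) := by
    field_simp
  have hgain : 2 * γ * (m * L * ‖a‖ ^ 2) / (m + L) ≤ 2 * γ * ⟪a, g⟫ - γ ^ 2 * ‖g‖ ^ 2 := by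
    rw [div_le_iff₀ hmL]
    nlinarith [mul_le_mul_of_nonneg_right hstep (sq_nonneg ‖g‖)]
  linarith

theorem norm_add_smul_sq_le_of_contraction {w v : E} {κ γ C a : ℝ} (hκ : 0 < κ) (hγ : 0 < γ)
    (ha : 0 ≤ a) (hw : ‖w‖ ^ 2 ≤ (1 - 2 * κ * γ) * a) (hv : ‖v‖ ≤ C) :
    ‖w + (γ ^ 2 / 2) • v‖ ^ 2 ≤ (1 - κ * γ) * a + γ ^ 3 * (C ^ 2 / (4 * κ) + γ * C ^ 2 / 4) := by
  have htri := norm_add_le w ((γ ^ 2 / 2) • v)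
  rw [norm_smul, Real.norm_of_nonneg (by positivity : (0 : ℝ) ≤ γ ^ 2 / 2)] at htri
  have hyoung : γ ^ 2 * (‖w‖ * ‖v‖) ≤ κ * γ * ‖w‖ ^ 2 + γ ^ 3 * ‖v‖ ^ 2 / (4 * κ) := by
    have hsq : 0 ≤ γ * (2 * κ * ‖w‖ - γ * ‖v‖) ^ 2 / (4 * κ) := by positivity
    have hexp : γ * (2 * κ * ‖w‖ - γ * ‖v‖) ^ 2 / (4 * κ)
        = κ * γ * ‖w‖ ^ 2 + γ ^ 3 * ‖v‖ ^ 2 / (4 * κ) - γ ^ 2 * (‖w‖ * ‖v‖) := by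
      field_simp
      ring
    linarith
  have hvC : ‖v‖ ^ 2 ≤ C ^ 2 := pow_le_pow_left₀ (norm_nonneg v) hv 2
  have hC : γ ^ 3 * ‖v‖ ^ 2 / (4 * κ) ≤ γ ^ 3 * C ^ 2 / (4 * κ) := by gcongr
  calc ‖w + (γ ^ 2 / 2) • v‖ ^ 2
      ≤ (‖w‖ + γ ^ 2 / 2 * ‖v‖) ^ 2 := pow_le_pow_left₀ (norm_nonneg _) htri 2
    _ = ‖w‖ ^ 2 + γ ^ 2 * (‖w‖ * ‖v‖) + γ ^ 4 / 4 * ‖v‖ ^ 2 := by ring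
    _ ≤ (1 + κ * γ) * ‖w‖ ^ 2 + γ ^ 3 * C ^ 2 / (4 * κ) + γ ^ 4 / 4 * C ^ 2 := by
      nlinarith [mul_le_mul_of_nonneg_left hvC (by positivity : (0 : ℝ) ≤ γ ^ 4 / 4)]
    _ ≤ (1 - κ * γ) * a + γ ^ 3 * C ^ 2 / (4 * κ) + γ ^ 4 / 4 * C ^ 2 := by
      have hw' := mul_le_mul_of_nonneg_left hw (by positivity : 0 ≤ 1 + κ * γ)
      nlinarith [mul_nonneg (mul_nonneg hκ.le hγ.le) (mul_nonneg (mul_nonneg hκ.le hγ.le) ha)]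
    _ = (1 - κ * γ) * a + γ ^ 3 * (C ^ 2 / (4 * κ) + γ * C ^ 2 / 4) := by ring

/-- One-step contraction estimate for the drift of the higher-order scheme. -/
theorem one_step_contraction {d : ℕ} (U : EuclideanSpace ℝ (Fin d) → ℝ)
    (hU : ContDiff ℝ 1 U) (m L₁ : ℝ) (hm : 0 < m) (hL₁ : 0 < L₁)
    (hconv : ∀ x y : EuclideanSpace ℝ (Fin d),
      (inner ℝ (x - y) (gradient U x - gradient U y) : ℝ) ≥ m * ‖x - y‖^2)
    (hLip : ∀ x y : EuclideanSpace ℝ (Fin d),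
      ‖gradient U x - gradient U y‖ ≤ L₁ * ‖x - y‖)
    (xstar : EuclideanSpace ℝ (Fin d)) (hmin : ∀ y, U xstar ≤ U y)
    (mt : ℝ) (hmt : mt = m * L₁ / (m + L₁))
    (γ : ℝ) (hγ : γ ∈ Set.Ioo 0 (1/mt))
    (C₀ : ℝ) (v : EuclideanSpace ℝ (Fin d)) (hv : ‖v‖ ≤ C₀)
    (hside : -2*γ/(m + L₁) + (5/4)*γ^2 + γ^3*L₁^2/(2*mt) + γ^4*L₁^2/2 ≤ 0)
    (x : EuclideanSpace ℝ (Fin d)) :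
    ‖x - xstar - γ • gradient U x + (γ^2/2) • v‖^2
      ≤ (1 - mt*γ) * ‖x - xstar‖^2
        + γ^3 * (C₀^2/(4*mt) + γ*C₀^2/4 + γ*‖gradient U x‖*‖v‖) := by
  have hγ0 : 0 < γ := hγ.1
  have hmL : 0 < m + L₁ := by linarith
  have hmt0 : 0 < mt := by rw [hmt]; positivity
  have hgrad_min : gradient U xstar = 0 := by
    simp [gradient, IsLocalMin.fderiv_eq_zero (Filter.Eventually.of_forall hmin)]
  have hco := mul_inner_gradient_sub_ge_of_strongly_monotone_of_lipschitz
    (hU.differentiable one_ne_zero) hm hL₁.le hconv hLip x xstar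
  rw [hgrad_min, sub_zero] at hco
  have hstep : γ ^ 2 * (m + L₁) ≤ 2 * γ := by
    rw [← le_div_iff₀ hmL]
    have hneg : -2 * γ / (m + L₁) = -(2 * γ / (m + L₁)) := by ring
    have hcubic : 0 ≤ γ ^ 3 * L₁ ^ 2 / (2 * mt) + γ ^ 4 * L₁ ^ 2 / 2 := by positivity
    linarith [sq_nonneg γ]
  have hdrift := norm_sub_smul_sq_le_of_cocoercive hmL hco hγ0.le hstep
  rw [← hmt, mul_right_comm] at hdrift
  have hfinal := norm_add_smul_sq_le_of_contraction hmt0 hγ0 (sq_nonneg _) hdrift hv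
  have hslack : 0 ≤ γ ^ 3 * (γ * ‖gradient U x‖ * ‖v‖) := by positivity
  linarith
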